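/- arXiv:2403.00320 — 3 statements merged into one kernel-verified Lean document; each statement's English description precedes it below -/
import Mathlib

section
/- Let H be a compact subset of (0,∞) × ℝ. There is a constant κ ∈ (0,∞) such that for every h ∈ H, every càdlàg ψ : [0,∞) → ℝ² with ψ₁(0) ≥ 0, and every 0 ≤ s ≤ t: if φ = Γ^h(ψ) is the solution of the Skorohod problem on ℝ₊ × ℝ with reflection direction h, then osc(φ, [s,t]) ≤ κ · osc(ψ, [s,t]), where osc(ξ, I) = sup{‖ξ(u) − ξ(v)‖ : u, v ∈ I}. -/
open Filter Set

/-- A function is càdlàg: right-continuous with left limits. -/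
def IsCadlag {E : Type*} [TopologicalSpace E] (f : ℝ → E) : Prop :=
  ∀ t : ℝ, ContinuousWithinAt f (Set.Ici t) t ∧
    ∃ l : E, Filter.Tendsto f (nhdsWithin t (Set.Iio t)) (nhds l)

/-!
Write `Γ^h ψ = ψ + (M / h̄₁) • h̄` with `M t = sup_{[0,t]} (ψ₁)⁻` the running supremum of the
negative part of the first coordinate. On `[s,t]` the increments of `M` are bounded by those
of `(ψ₁)⁻`, hence by `osc(ψ, [s,t])`: a new maximum of `(ψ₁)⁻` reached after `v` exceeds its
value at `v` by at most the oscillation. So `osc(Γ^h ψ, [s,t]) ≤ (1 + 1/h̄₁) osc(ψ, [s,t])`, and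
`1/h̄₁ = ‖h‖/h₁` is continuous on the compact set `H`, hence bounded. Càdlàg paths are bounded on
compact sets, which keeps all the suprema finite.
-/

open Bornology Metric

theorem IsCadlag.isBounded_image {E : Type*} [PseudoMetricSpace E] {f : ℝ → E}
    (hf : IsCadlag f) {K : Set ℝ} (hK : IsCompact K) : IsBounded (f '' K) := by
  refine hK.induction_on (p := fun S => IsBounded (f '' S)) (by simp)
    (fun S T hST hT => hT.subset (image_mono hST))
    (fun S T hS hT => by simpa only [image_union] using hS.union hT) fun x _ => ?_
  obtain ⟨hright, l, hleft⟩ := hf x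
  have hnhds : f ⁻¹' (ball l 1 ∪ ball (f x) 1) ∈ nhds x := by
    rw [← nhdsLT_sup_nhdsGE, mem_sup]
    exact ⟨mem_of_superset (hleft (ball_mem_nhds l one_pos)) fun y hy => Or.inl hy,
      mem_of_superset (hright (ball_mem_nhds (f x) one_pos)) fun y hy => Or.inr hy⟩
  exact ⟨_, mem_nhdsWithin_of_mem_nhds hnhds,
    (isBounded_ball.union isBounded_ball).subset (image_preimage_subset _ _)⟩

/-- The oscillation `osc(f, [s,t])`; it is junk (`0`) when `f` is unbounded on `[s,t]`. -/
noncomputable def osc {E : Type*} [SeminormedAddCommGroup E] (f : ℝ → E) (s t : ℝ) : ℝ :=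
  sSup ((fun p : ℝ × ℝ => ‖f p.1 - f p.2‖) '' (Icc s t ×ˢ Icc s t))

section Oscillation

variable {E : Type*} [SeminormedAddCommGroup E] {f : ℝ → E} {s t u v c : ℝ}

theorem bddAbove_norm_sub_image_Icc_prod (hf : IsBounded (f '' Icc s t)) :
    BddAbove ((fun p : ℝ × ℝ => ‖f p.1 - f p.2‖) '' (Icc s t ×ˢ Icc s t)) := by
  obtain ⟨C, hC⟩ := isBounded_iff.1 hf
  refine ⟨C, ?_⟩
  rintro _ ⟨⟨u, v⟩, ⟨hu, hv⟩, rfl⟩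
  simpa only [dist_eq_norm] using hC (mem_image_of_mem f hu) (mem_image_of_mem f hv)

theorem norm_sub_le_osc (hf : IsBounded (f '' Icc s t)) (hu : u ∈ Icc s t) (hv : v ∈ Icc s t) :
    ‖f u - f v‖ ≤ osc f s t :=
  le_csSup (bddAbove_norm_sub_image_Icc_prod hf) ⟨(u, v), ⟨hu, hv⟩, rfl⟩

theorem osc_nonneg (hf : IsBounded (f '' Icc s t)) (hst : s ≤ t) : 0 ≤ osc f s t := by
  simpa using norm_sub_le_osc hf (left_mem_Icc.2 hst) (left_mem_Icc.2 hst)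

theorem osc_le (hst : s ≤ t) (h : ∀ u ∈ Icc s t, ∀ v ∈ Icc s t, ‖f u - f v‖ ≤ c) :
    osc f s t ≤ c := by
  refine csSup_le ⟨_, (s, s), ⟨left_mem_Icc.2 hst, left_mem_Icc.2 hst⟩, rfl⟩ ?_
  rintro _ ⟨⟨u, v⟩, ⟨hu, hv⟩, rfl⟩
  exact h u hu v hv

end Oscillation

section RunningSup

variable {g : ℝ → ℝ} {a s t u v c : ℝ}

theorem csSup_image_Icc_le_add (hg : BddAbove (g '' Icc a v)) (hav : a ≤ v) (hvu : v ≤ u)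
    (hc : ∀ r ∈ Icc v u, g r ≤ g v + c) : sSup (g '' Icc a u) ≤ sSup (g '' Icc a v) + c := by
  have hgv : g v ≤ sSup (g '' Icc a v) := le_csSup hg (mem_image_of_mem g (right_mem_Icc.2 hav))
  have hc0 : 0 ≤ c := by linarith [hc v (left_mem_Icc.2 hvu)]
  refine csSup_le ((nonempty_Icc.2 (hav.trans hvu)).image g) ?_
  rintro _ ⟨r, hr, rfl⟩
  rcases le_total r v with hrv | hvr
  · linarith [le_csSup hg (mem_image_of_mem g ⟨hr.1, hrv⟩)]
  · linarith [hc r ⟨hvr, hr.2⟩]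

theorem abs_sSup_image_Icc_sub_le (hg : BddAbove (g '' Icc a t)) (has : a ≤ s)
    (hc : ∀ r ∈ Icc s t, ∀ r' ∈ Icc s t, g r ≤ g r' + c) (hu : u ∈ Icc s t) (hv : v ∈ Icc s t) :
    |sSup (g '' Icc a u) - sSup (g '' Icc a v)| ≤ c := by
  wlog hvu : v ≤ u generalizing u v
  · rw [abs_sub_comm]
    exact this hv hu (le_of_not_ge hvu)
  have hbdd : ∀ w ∈ Icc s t, BddAbove (g '' Icc a w) := fun w hw =>
    hg.mono (image_mono (Icc_subset_Icc_right hw.2))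
  have hmono : sSup (g '' Icc a v) ≤ sSup (g '' Icc a u) :=
    csSup_le_csSup (hbdd u hu) ((nonempty_Icc.2 (has.trans hv.1)).image g)
      (image_mono (Icc_subset_Icc_right hvu))
  have hincr := csSup_image_Icc_le_add (hbdd v hv) (has.trans hv.1) hvu
    fun r hr => hc r ⟨hv.1.trans hr.1, hr.2.trans hu.2⟩ v hv
  rw [abs_le]
  constructor <;> linarith

end RunningSup

/-- The explicit solution `Γ^h ψ` of the Skorohod problem on `ℝ₊ × ℝ` with direction `h`. -/
noncomputable def skorohodMap (h : EuclideanSpace ℝ (Fin 2)) (ψ : ℝ → EuclideanSpace ℝ (Fin 2))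
    (t : ℝ) : EuclideanSpace ℝ (Fin 2) :=
  ψ t + ((sSup ((fun u => max (-(ψ u 0)) 0) '' Icc 0 t)) / ((‖h‖⁻¹ • h) 0)) • (‖h‖⁻¹ • h)

theorem norm_skorohodMap_sub_le {h : EuclideanSpace ℝ (Fin 2)} (hh : 0 < h 0)
    {ψ : ℝ → EuclideanSpace ℝ (Fin 2)} {s t u v : ℝ} (hψ : IsBounded (ψ '' Icc 0 t))
    (hs : 0 ≤ s) (hu : u ∈ Icc s t) (hv : v ∈ Icc s t) :
    ‖skorohodMap h ψ u - skorohodMap h ψ v‖ ≤ (1 + ‖h‖ / h 0) * osc ψ s t := by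
  set g : ℝ → ℝ := fun u => max (-(ψ u 0)) 0
  set M : ℝ → ℝ := fun r => sSup (g '' Icc 0 r)
  set e := ‖h‖⁻¹ • h
  have hne : h ≠ 0 := fun h0 => by simp [h0] at hh
  have he : ‖e‖ = 1 := norm_smul_inv_norm hne
  have he0 : e 0 = h 0 / ‖h‖ := by simp [e, div_eq_inv_mul]
  have hepos : 0 < e 0 := by rw [he0]; exact div_pos hh (norm_pos_iff.2 hne)
  have hψst : IsBounded (ψ '' Icc s t) := hψ.subset (image_mono (Icc_subset_Icc_left hs))
  have hg : BddAbove (g '' Icc 0 t) := by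
    obtain ⟨C, hC⟩ := hψ.exists_norm_le
    refine ⟨C, ?_⟩
    rintro _ ⟨r, hr, rfl⟩
    have hcoord : |ψ r 0| ≤ C := (PiLp.norm_apply_le (ψ r) 0).trans (hC _ (mem_image_of_mem ψ hr))
    exact max_le ((neg_le_abs _).trans hcoord) ((abs_nonneg _).trans hcoord)
  have hM : |M u - M v| ≤ osc ψ s t := by
    refine abs_sSup_image_Icc_sub_le hg hs (fun r hr r' hr' => ?_) hu hv
    have hlip : |g r - g r'| ≤ |ψ r 0 - ψ r' 0| := by
      simpa only [g, neg_sub_neg, abs_sub_comm] using abs_max_sub_max_le_abs (-(ψ r 0)) (-(ψ r' 0)) 0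
    have hcoord : |ψ r 0 - ψ r' 0| ≤ ‖ψ r - ψ r'‖ := PiLp.norm_apply_le (ψ r - ψ r') 0
    linarith [le_abs_self (g r - g r'), norm_sub_le_osc hψst hr hr']
  have hdiff : skorohodMap h ψ u - skorohodMap h ψ v = (ψ u - ψ v) + ((M u - M v) / e 0) • e := by
    simp only [skorohodMap, sub_div, sub_smul]
    abel
  calc ‖skorohodMap h ψ u - skorohodMap h ψ v‖
      ≤ ‖ψ u - ψ v‖ + |M u - M v| / e 0 := by
        rw [hdiff]
        refine (norm_add_le _ _).trans_eq ?_
        rw [norm_smul, he, mul_one, Real.norm_eq_abs, abs_div, abs_of_pos hepos]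
    _ ≤ osc ψ s t + osc ψ s t / e 0 := by
        gcongr
        exact norm_sub_le_osc hψst hu hv
    _ = (1 + ‖h‖ / h 0) * osc ψ s t := by
        rw [he0]; field_simp

/-- Uniform oscillation bound for the Skorohod map `Γ^h` on the half plane:
for `h` ranging over a compact subset `H` of `(0,∞) × ℝ` there is a single
constant `κ` with `osc(Γ^h ψ, [s,t]) ≤ κ · osc(ψ, [s,t])`. -/
theorem skorohod_map_oscillation_bound (H : Set (EuclideanSpace ℝ (Fin 2)))
    (hHc : IsCompact H) (hHpos : ∀ h ∈ H, 0 < h 0) :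
    ∃ κ : ℝ, 0 < κ ∧
      ∀ h ∈ H, ∀ ψ : ℝ → EuclideanSpace ℝ (Fin 2),
        IsCadlag ψ → 0 ≤ ψ 0 0 →
        ∀ φ : ℝ → EuclideanSpace ℝ (Fin 2),
          (φ = fun t => ψ t +
            ((sSup ((fun u => max (-(ψ u 0)) 0) '' Set.Icc 0 t)) / ((‖h‖⁻¹ • h) 0)) •
              (‖h‖⁻¹ • h)) →
          ∀ s t : ℝ, 0 ≤ s → s ≤ t →
            sSup ((fun p : ℝ × ℝ => ‖φ p.1 - φ p.2‖) '' (Set.Icc s t ×ˢ Set.Icc s t))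
              ≤ κ * sSup ((fun p : ℝ × ℝ => ‖ψ p.1 - ψ p.2‖) '' (Set.Icc s t ×ˢ Set.Icc s t)) := by
  have hcont : ContinuousOn (fun h : EuclideanSpace ℝ (Fin 2) => 1 + ‖h‖ / h 0) H :=
    continuousOn_const.add <| continuous_norm.continuousOn.div
      (EuclideanSpace.proj (0 : Fin 2)).continuous.continuousOn fun h hh => (hHpos h hh).ne'
  obtain ⟨C, hC⟩ := hHc.bddAbove_image hcont
  refine ⟨max C 1, one_pos.trans_le (le_max_right _ _), ?_⟩
  rintro h hh ψ hψ - φ rfl s t hs hst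
  have hbdd : IsBounded (ψ '' Icc 0 t) := hψ.isBounded_image isCompact_Icc
  have hκ : 1 + ‖h‖ / h 0 ≤ max C 1 := (hC (mem_image_of_mem _ hh)).trans (le_max_left _ _)
  refine osc_le (f := skorohodMap h ψ) hst fun u hu v hv => ?_
  calc ‖skorohodMap h ψ u - skorohodMap h ψ v‖
      ≤ (1 + ‖h‖ / h 0) * osc ψ s t := norm_skorohodMap_sub_le (hHpos h hh) hbdd hs hu hv
    _ ≤ max C 1 * osc ψ s t :=
        mul_le_mul_of_nonneg_right hκ (osc_nonneg (hbdd.subset (image_mono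
          (Icc_subset_Icc_left hs))) hst)
end

section
/- Let μ₁, μ₂, ν₁, ν₂, σ₁, σ₂ be strictly positive reals. For i = 1,2 with i# = 3 − i, define d^(i) ∈ ℝ² by d^(i)_i = 1 and d^(i)_{i#} = −ν_{i#}/μ_i, let Σ = diag(σ₁, σ₂), d*^(i) = Σ⁻¹ d^(i), and θ*^(i) = arcsin(−d*^(i)_{i#}/‖d*^(i)‖). Then tan θ*^(1) · tan θ*^(2) = (ν₁ν₂)/(μ₁μ₂). In particular the product is independent of σ₁, σ₂. -/
open Real

lemma tan_arcsin_aux (a b : ℝ) (ha : 0 < a) (hb : 0 < b) :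
    Real.tan (Real.arcsin (a / Real.sqrt (b ^ 2 + a ^ 2))) = a / b := by
  set n := Real.sqrt (b ^ 2 + a ^ 2) with hn
  have hn2 : n ^ 2 = b ^ 2 + a ^ 2 := Real.sq_sqrt (by positivity)
  have hnpos : 0 < n := Real.sqrt_pos.2 (by positivity)
  rw [Real.tan_arcsin]
  have h1 : 1 - (a / n) ^ 2 = (b / n) ^ 2 := by
    field_simp
    nlinarith
  rw [h1, Real.sqrt_sq (by positivity)]
  field_simp

/-- The product of the tangents of the transformed reflection angles equals
`ν₁ν₂/(μ₁μ₂)`, independently of the diagonal scaling `σ₁, σ₂`. -/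
theorem tan_product_of_reflection_angles (μ₁ μ₂ ν₁ ν₂ σ₁ σ₂ : ℝ)
    (hμ₁ : 0 < μ₁) (hμ₂ : 0 < μ₂) (hν₁ : 0 < ν₁) (hν₂ : 0 < ν₂)
    (hσ₁ : 0 < σ₁) (hσ₂ : 0 < σ₂)
    -- `d*^(1) = Σ⁻¹ d^(1) = (1/σ₁, -(ν₂/μ₁)/σ₂)`, `d*^(2) = Σ⁻¹ d^(2) = (-(ν₁/μ₂)/σ₁, 1/σ₂)`
    (nd₁ nd₂ θ₁ θ₂ : ℝ)
    (hnd₁ : nd₁ = Real.sqrt ((1 / σ₁) ^ 2 + ((ν₂ / μ₁) / σ₂) ^ 2))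
    (hnd₂ : nd₂ = Real.sqrt (((ν₁ / μ₂) / σ₁) ^ 2 + (1 / σ₂) ^ 2))
    (hθ₁ : θ₁ = Real.arcsin (-(-((ν₂ / μ₁) / σ₂)) / nd₁))
    (hθ₂ : θ₂ = Real.arcsin (-(-((ν₁ / μ₂) / σ₁)) / nd₂)) :
    Real.tan θ₁ * Real.tan θ₂ = (ν₁ * ν₂) / (μ₁ * μ₂) := by
  subst hnd₁ hnd₂ hθ₁ hθ₂
  simp only [neg_neg]
  have h1 := tan_arcsin_aux ((ν₂ / μ₁) / σ₂) (1 / σ₁) (by positivity) (by positivity)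
  have h2 := tan_arcsin_aux ((ν₁ / μ₂) / σ₁) (1 / σ₂) (by positivity) (by positivity)
  rw [add_comm] at h2
  rw [h1, h2]
  field_simp
end

section
/- Fix λ₁, λ₂ > 0, ν₂ > 0, A ≥ ν₂(λ₁λ₂)^{-1/2}, n ∈ ℕ with n ≥ 1, and Ψ(x) = a₀² − (x₁²/λ₁ + x₂²/λ₂ + 2A x₁ x₂ (λ₁λ₂)^{-1/2}). Then for every x = (0, x₂) with x₂ ≥ n^{-1/2}: nλ₁[Ψ(x + n^{-1/2}e^(1)) − Ψ(x)] + nλ₂[Ψ(x + n^{-1/2}e^(2)) − Ψ(x)] + n(λ₂ + ν₂)[Ψ(x − n^{-1/2}e^(2)) − Ψ(x)] ≤ −3. -/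
/-! On the face the mixed term of `Ψ` only sees the step in the first coordinate, so the
generator is computed exactly: it equals `-(3 + ν₂/λ₂) + 2 n h x₂ (ν₂/λ₂ - A λ₁ (λ₁λ₂)^{-1/2})`
with `h = n^{-1/2}`. The condition on `A` says precisely that the drift coefficient is
nonpositive, since `λ₁ (λ₁λ₂)^{-1/2} · (λ₁λ₂)^{-1/2} = 1/λ₂`. -/

lemma mul_rpow_neg_half_sq {a : ℝ} (ha : 0 < a) : a * (a ^ (-(1 / 2) : ℝ)) ^ 2 = 1 := by
  rw [Real.rpow_neg ha.le, ← Real.sqrt_eq_rpow, inv_pow, Real.sq_sqrt ha.le,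
    mul_inv_cancel₀ ha.ne']

lemma div_le_of_mul_rpow_neg_half_le {l₁ l₂ ν A : ℝ} (hl₁ : 0 < l₁) (hl₂ : 0 < l₂)
    (hA : ν * (l₁ * l₂) ^ (-(1 / 2) : ℝ) ≤ A) :
    ν / l₂ ≤ A * (l₁ * l₂) ^ (-(1 / 2) : ℝ) * l₁ := by
  set c := (l₁ * l₂) ^ (-(1 / 2) : ℝ)
  have hc : 0 ≤ c := Real.rpow_nonneg (by positivity) _
  have hcc : l₁ * l₂ * c ^ 2 = 1 := mul_rpow_neg_half_sq (by positivity)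
  calc ν / l₂ = ν * c * (c * l₁) := by
        rw [div_eq_iff hl₂.ne']
        linear_combination -ν * hcc
    _ ≤ A * (c * l₁) := by gcongr
    _ = A * c * l₁ := by ring

lemma face_generator_eq {l₁ l₂ ν a₀ A c m h x₂ : ℝ} (hl₁ : l₁ ≠ 0) (hl₂ : l₂ ≠ 0)
    {Ψ : ℝ × ℝ → ℝ} (hΨ : ∀ x : ℝ × ℝ, Ψ x = a₀ ^ 2 - (x.1 ^ 2 / l₁ + x.2 ^ 2 / l₂ + 2 * A * x.1 * x.2 * c)) :
    m * l₁ * (Ψ (0 + h, x₂) - Ψ (0, x₂)) + m * l₂ * (Ψ (0, x₂ + h) - Ψ (0, x₂))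
        + m * (l₂ + ν) * (Ψ (0, x₂ - h) - Ψ (0, x₂))
      = -(3 + ν / l₂) * (m * h ^ 2) - 2 * (A * c * l₁ - ν / l₂) * (m * h * x₂) := by
  simp only [hΨ]
  field_simp
  ring

theorem discrete_generator_face (l₁ l₂ ν₂ a₀ A : ℝ) (n : ℕ) (hn : 1 ≤ n)
    (hl₁ : 0 < l₁) (hl₂ : 0 < l₂) (hν₂ : 0 < ν₂)
    (hA : ν₂ * (l₁ * l₂) ^ (-(1 / 2) : ℝ) ≤ A)
    (Ψ : ℝ × ℝ → ℝ)
    (hΨ : ∀ x : ℝ × ℝ,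
      Ψ x = a₀ ^ 2 - (x.1 ^ 2 / l₁ + x.2 ^ 2 / l₂ + 2 * A * x.1 * x.2 * (l₁ * l₂) ^ (-(1 / 2) : ℝ)))
    (x₂ : ℝ) (hx₂ : (n : ℝ) ^ (-(1 / 2) : ℝ) ≤ x₂) :
    (n : ℝ) * l₁ * (Ψ ((0 : ℝ) + (n : ℝ) ^ (-(1 / 2) : ℝ), x₂) - Ψ (0, x₂))
      + (n : ℝ) * l₂ * (Ψ (0, x₂ + (n : ℝ) ^ (-(1 / 2) : ℝ)) - Ψ (0, x₂))
      + (n : ℝ) * (l₂ + ν₂) * (Ψ (0, x₂ - (n : ℝ) ^ (-(1 / 2) : ℝ)) - Ψ (0, x₂)) ≤ -3 := by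
  have hn' : (0 : ℝ) < n := by exact_mod_cast hn
  rw [face_generator_eq hl₁.ne' hl₂.ne' hΨ, mul_rpow_neg_half_sq hn']
  have hdrift : 0 ≤ (n : ℝ) * (n : ℝ) ^ (-(1 / 2) : ℝ) * x₂ :=
    have hh : 0 ≤ (n : ℝ) ^ (-(1 / 2) : ℝ) := Real.rpow_nonneg hn'.le _
    mul_nonneg (mul_nonneg hn'.le hh) (hh.trans hx₂)
  have hcoef := div_le_of_mul_rpow_neg_half_le hl₁ hl₂ hA
  nlinarith [div_pos hν₂ hl₂, mul_nonneg (sub_nonneg.2 hcoef) hdrift]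
end
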